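/- arXiv:1111.1786 — 2 statements merged into one kernel-verified Lean document; each statement's English description precedes it below -/
import Mathlib

section
/- Let {Y_j} be a sequence of independent Gaussian random variables with Y_j ~ N(0, σ_j²) such that σ² := lim_{n→∞} (1/n) Σ_{j=1}^n σ_j² exists and is strictly positive, and let {a_j} be a sequence of real numbers such that a := lim_{n→∞} (1/n) Σ_{j=1}^n a_j exists. Then for every t ∈ ℝ, lim_{p→0⁺} Σ_{n=1}^∞ (1-p)^{n-1} p · E[exp(i t (p^{1/2} S_n + p b_n))] = 1 / (1 - i a t + σ² t² / 2), where S_n = Σ_{j=1}^n Y_j and b_n = Σ_{j=1}^n a_j; i.e., p^{1/2} Σ_{j=1}^{ν_p} (Y_j + p^{1/2} a_j) converges in distribution to AL(0, a, σ) as p → 0⁺. -/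
/-!
Writing `b n = ∑_{j<n} a j` and `τ n = ∑_{j<n} v j`, independence and Gaussianity give
`E exp(i u S_n) = exp(-τ_n u²/2)`, so the `n`-th term of the series is `(1-p)^n p exp(p z_{n+1})`
with `z_n = i t b_n - t² τ_n / 2`. Here `Re z_n ≤ 0` and `z_n / n → w = i A t - σ² t² / 2`.
Replacing `z_{n+1}` by `(n+1) w` gives a geometric series with sum
`p e^{pw} / (1 - (1-p) e^{pw}) → 1 / (1 - w)`. Since `exp` is `1`-Lipschitz on the left
half-plane and `|z_k - k w| ≤ C + ε k`, the error is at most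
`∑ (1-p)^n p² (C + ε (n+1)) = p C + ε`.
-/

open MeasureTheory ProbabilityTheory Filter Complex Set
open scoped Topology NNReal

section GaussianPartialSums

variable {Ω ι : Type*} [MeasurableSpace Ω] {μ : Measure Ω}
  {Y : ι → Ω → ℝ} {v : ι → ℝ≥0}

lemma charFun_map_finsetSum_gaussianReal (hindep : iIndepFun Y μ)
    (hgauss : ∀ j, μ.map (Y j) = gaussianReal 0 (v j)) (s : Finset ι) (u : ℝ) :
    charFun (μ.map fun ω => ∑ j ∈ s, Y j ω) u = cexp (-((∑ j ∈ s, (v j : ℝ)) * u ^ 2 / 2)) := by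
  have hY : ∀ j ∈ s, AEMeasurable (Y j) μ := fun j _ =>
    aemeasurable_of_map_neZero (by rw [hgauss j]; infer_instance)
  rw [(hindep.restrict s).charFun_map_fun_finsetSum_eq_prod hY, Finset.prod_apply,
    Complex.ofReal_sum, Finset.sum_mul, Finset.sum_div, ← Finset.sum_neg_distrib, Complex.exp_sum]
  refine Finset.prod_congr rfl fun j _ => ?_
  rw [hgauss, charFun_gaussianReal]
  push_cast
  ring_nf

lemma integral_cexp_I_mul_finsetSum_gaussianReal (hindep : iIndepFun Y μ)
    (hgauss : ∀ j, μ.map (Y j) = gaussianReal 0 (v j)) (s : Finset ι) (u c : ℝ) :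
    ∫ ω, cexp (I * ((u * ∑ j ∈ s, Y j ω + c : ℝ) : ℂ)) ∂μ
      = cexp (c * I - (∑ j ∈ s, (v j : ℝ)) * u ^ 2 / 2) := by
  have hS : AEMeasurable (fun ω => ∑ j ∈ s, Y j ω) μ :=
    Finset.aemeasurable_fun_sum s fun j _ =>
      aemeasurable_of_map_neZero (by rw [hgauss j]; infer_instance)
  have hchar := charFun_map_finsetSum_gaussianReal hindep hgauss s u
  rw [charFun_apply_real, integral_map hS (by fun_prop)] at hchar
  rw [sub_eq_add_neg, add_comm, Complex.exp_add, ← hchar, ← integral_mul_const]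
  congr with ω
  rw [← Complex.exp_add]
  push_cast
  ring_nf

end GaussianPartialSums

lemma norm_cexp_sub_cexp_le {a b : ℂ} (ha : a.re ≤ 0) (hb : b.re ≤ 0) :
    ‖cexp a - cexp b‖ ≤ ‖a - b‖ := by
  have h := Convex.norm_image_sub_le_of_norm_hasFDerivWithin_le
    (f := cexp) (s := {z : ℂ | z.re ≤ 0}) (C := 1)
    (f' := fun z => (ContinuousLinearMap.restrictScalars ℝ
        ((1 : ℂ →L[ℂ] ℂ).smulRight (cexp z))))
    (fun z _ => ((Complex.hasDerivAt_exp z).hasFDerivAt.restrictScalars ℝ).hasFDerivWithinAt)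
    (fun z hz => by
      rw [ContinuousLinearMap.norm_restrictScalars,
        ContinuousLinearMap.norm_smulRight_apply]
      simpa [ContinuousLinearMap.one_def, Complex.norm_exp]
        using Real.exp_le_one_iff.mpr hz)
    (convex_halfSpace_re_le 0) hb ha
  simpa using h

lemma exists_le_const_add_mul_of_tendsto_div {x : ℕ → ℝ}
    (hx : Tendsto (fun k => x k / k) atTop (𝓝 0)) {ε : ℝ} (hε : 0 < ε) :
    ∃ C, ∀ k : ℕ, x k ≤ C + ε * k := by
  have hev : ∀ᶠ k : ℕ in atTop, x k - ε * k ≤ 0 := by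
    filter_upwards [hx.eventually (gt_mem_nhds hε), eventually_gt_atTop 0] with k hk hk0
    rw [div_lt_iff₀ (by positivity)] at hk
    linarith
  obtain ⟨C, hC⟩ := (isBoundedUnder_of_eventually_le hev).bddAbove_range
  exact ⟨C, fun k => by linarith [hC (mem_range_self k)]⟩

lemma hasSum_geometric_mul_affine {p : ℝ} (hp : p ∈ Ioo 0 1) (C ε : ℝ) :
    HasSum (fun n : ℕ => (1 - p) ^ n * p * (p * (C + ε * (n + 1)))) (p * C + ε) := by
  have hq : ‖1 - p‖ < 1 := by
    rw [Real.norm_of_nonneg (by linarith [hp.2])]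
    linarith [hp.1]
  have hgeom : HasSum (fun n : ℕ => (1 - p) ^ n) p⁻¹ := by
    simpa using hasSum_geometric_of_norm_lt_one hq
  have harith : HasSum (fun n : ℕ => (n : ℝ) * (1 - p) ^ n) ((1 - p) / p ^ 2) := by
    simpa using hasSum_coe_mul_geometric_of_norm_lt_one hq
  have hsum : p * C + ε = p ^ 2 * (C + ε) * p⁻¹ + p ^ 2 * ε * ((1 - p) / p ^ 2) := by
    field_simp [hp.1.ne']
    ring
  rw [hsum]
  exact ((hgeom.mul_left _).add (harith.mul_left _)).congr_fun fun n => by ring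

lemma hasSum_geometric_mul_cexp {p : ℝ} (hp : p ∈ Ioo 0 1) {w : ℂ} (hw : w.re ≤ 0) :
    HasSum (fun n : ℕ => (((1 - p) ^ n * p : ℝ) : ℂ) * cexp (p * ((n + 1) * w)))
      (p * cexp (p * w) / (1 - (1 - p) * cexp (p * w))) := by
  have hq : ‖(1 - p : ℂ) * cexp (p * w)‖ < 1 := by
    have hexp : ‖cexp (p * w)‖ ≤ 1 := by
      rw [Complex.norm_exp, Real.exp_le_one_iff, Complex.re_ofReal_mul]
      exact mul_nonpos_of_nonneg_of_nonpos hp.1.le hw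
    rw [norm_mul, ← Complex.ofReal_one, ← Complex.ofReal_sub, Complex.norm_real,
      Real.norm_of_nonneg (by linarith [hp.2])]
    nlinarith [hp.1, hp.2, norm_nonneg (cexp (p * w))]
  rw [div_eq_mul_inv]
  refine ((hasSum_geometric_of_norm_lt_one hq).mul_left _).congr_fun fun n => ?_
  rw [mul_pow, ← Complex.exp_nat_mul, show (p : ℂ) * ((n + 1) * w) = n * (p * w) + p * w by ring,
    Complex.exp_add]
  push_cast
  ring

lemma tendsto_mul_cexp_div_one_sub_mul_cexp {w : ℂ} (hw : w ≠ 1) :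
    Tendsto (fun p : ℝ => p * cexp (p * w) / (1 - (1 - p) * cexp (p * w))) (𝓝[>] 0)
      (𝓝 (1 - w)⁻¹) := by
  have hderiv : HasDerivAt (fun p : ℝ => cexp (p * w)) w 0 := by
    simpa using ((Complex.ofRealCLM.hasDerivAt (x := (0 : ℝ))).mul_const w).cexp
  have hslope : Tendsto (fun p : ℝ => (cexp (p * w) - 1) / p) (𝓝[>] 0) (𝓝 w) := by
    refine ((hasDerivAt_iff_tendsto_slope.mp hderiv).mono_left
      (nhdsWithin_mono _ fun x hx => ne_of_gt hx)).congr fun p => ?_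
    simp [slope, Complex.real_smul, div_eq_inv_mul]
  have hexp : Tendsto (fun p : ℝ => cexp (p * w)) (𝓝[>] 0) (𝓝 1) := by
    simpa using (hderiv.continuousAt.tendsto).mono_left nhdsWithin_le_nhds
  have hden : (1 : ℂ) - w ≠ 0 := sub_ne_zero.mpr (Ne.symm hw)
  -- dividing numerator and denominator by `p` exhibits a difference quotient of `exp (p w)`
  have hlim := hexp.mul ((hexp.sub hslope).inv₀ hden)
  rw [one_mul] at hlim
  refine hlim.congr' ?_
  filter_upwards [self_mem_nhdsWithin] with p (hp : 0 < p)
  have hp' : (p : ℂ) ≠ 0 := by exact_mod_cast hp.ne'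
  field_simp
  ring

lemma norm_tsum_geometric_cexp_sub_le {p : ℝ} (hp : p ∈ Ioo 0 1) {z : ℕ → ℂ} {w : ℂ}
    (hz : ∀ n, (z n).re ≤ 0) (hw : w.re ≤ 0) {C ε : ℝ}
    (hC : ∀ k : ℕ, ‖z k - k * w‖ ≤ C + ε * k) :
    ‖∑' n : ℕ, (((1 - p) ^ n * p : ℝ) : ℂ) * cexp (p * z (n + 1))
      - ∑' n : ℕ, (((1 - p) ^ n * p : ℝ) : ℂ) * cexp (p * ((n + 1) * w))‖ ≤ p * C + ε := by
  have hweight : ∀ n : ℕ, 0 ≤ (1 - p) ^ n * p := fun n =>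
    mul_nonneg (pow_nonneg (by linarith [hp.2]) n) hp.1.le
  have hre : ∀ u : ℂ, u.re ≤ 0 → ((p : ℂ) * u).re ≤ 0 := fun u hu => by
    rw [Complex.re_ofReal_mul]
    exact mul_nonpos_of_nonneg_of_nonpos hp.1.le hu
  have hlin : ∀ n : ℕ, (((n : ℂ) + 1) * w).re ≤ 0 := fun n => by
    rw [show (n : ℂ) + 1 = ((n + 1 : ℝ) : ℂ) by push_cast; rfl, Complex.re_ofReal_mul]
    exact mul_nonpos_of_nonneg_of_nonpos (by positivity) hw
  have hsummable : Summable fun n : ℕ => (((1 - p) ^ n * p : ℝ) : ℂ) * cexp (p * z (n + 1)) := by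
    refine Summable.of_norm_bounded ((summable_geometric_of_lt_one (sub_nonneg.mpr hp.2.le)
      (by linarith [hp.1])).mul_right p) fun n => ?_
    rw [norm_mul, Complex.norm_real, Real.norm_of_nonneg (hweight n)]
    refine mul_le_of_le_one_right (hweight n) ?_
    rw [Complex.norm_exp, Real.exp_le_one_iff]
    exact hre _ (hz _)
  rw [← (hsummable.tsum_sub (hasSum_geometric_mul_cexp hp hw).summable)]
  refine tsum_of_norm_bounded (hasSum_geometric_mul_affine hp C ε) fun n => ?_
  rw [← mul_sub, norm_mul, Complex.norm_real, Real.norm_of_nonneg (hweight n)]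
  refine mul_le_mul_of_nonneg_left ?_ (hweight n)
  calc ‖cexp (p * z (n + 1)) - cexp (p * ((n + 1) * w))‖
      ≤ ‖(p : ℂ) * z (n + 1) - p * ((n + 1) * w)‖ :=
        norm_cexp_sub_cexp_le (hre _ (hz _)) (hre _ (hlin n))
    _ = p * ‖z (n + 1) - (n + 1 : ℕ) * w‖ := by
      rw [← mul_sub, norm_mul, Complex.norm_real, Real.norm_of_nonneg hp.1.le]
      push_cast
      rfl
    _ ≤ p * (C + ε * (n + 1)) := by
      refine mul_le_mul_of_nonneg_left ?_ hp.1.le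
      exact_mod_cast hC (n + 1)

theorem tendsto_tsum_geometric_cexp {z : ℕ → ℂ} {w : ℂ} (hz : ∀ n, (z n).re ≤ 0)
    (hlim : Tendsto (fun n : ℕ => z n / n) atTop (𝓝 w)) :
    Tendsto (fun p : ℝ => ∑' n : ℕ, (((1 - p) ^ n * p : ℝ) : ℂ) * cexp (p * z (n + 1)))
      (𝓝[>] 0) (𝓝 (1 - w)⁻¹) := by
  have hw : w.re ≤ 0 := by
    refine le_of_tendsto' ((Complex.continuous_re.tendsto w).comp hlim) fun n => ?_
    simpa [Complex.div_natCast_re] using div_nonpos_of_nonpos_of_nonneg (hz n) n.cast_nonneg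
  have hw1 : w ≠ 1 := fun h => by norm_num [h] at hw
  have hlinear : Tendsto (fun p : ℝ => ∑' n : ℕ, (((1 - p) ^ n * p : ℝ) : ℂ)
      * cexp (p * ((n + 1) * w))) (𝓝[>] 0) (𝓝 (1 - w)⁻¹) := by
    refine (tendsto_mul_cexp_div_one_sub_mul_cexp hw1).congr' ?_
    filter_upwards [Ioo_mem_nhdsGT one_pos] with p hp
    exact (hasSum_geometric_mul_cexp hp hw).tsum_eq.symm
  have hdev : Tendsto (fun k : ℕ => ‖z k - k * w‖ / k) atTop (𝓝 0) := by
    refine (tendsto_iff_norm_sub_tendsto_zero.mp hlim).congr' ?_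
    filter_upwards [eventually_gt_atTop 0] with k hk
    have hk' : (k : ℂ) ≠ 0 := by exact_mod_cast hk.ne'
    rw [← Complex.norm_natCast, ← norm_div, sub_div, mul_div_cancel_left₀ _ hk']
  suffices Tendsto (fun p : ℝ => ∑' n : ℕ, (((1 - p) ^ n * p : ℝ) : ℂ) * cexp (p * z (n + 1))
      - ∑' n : ℕ, (((1 - p) ^ n * p : ℝ) : ℂ) * cexp (p * ((n + 1) * w))) (𝓝[>] 0) (𝓝 0) by
    simpa using hlinear.add this
  rw [NormedAddGroup.tendsto_nhds_zero]
  intro ε hε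
  obtain ⟨C, hC⟩ := exists_le_const_add_mul_of_tendsto_div hdev (half_pos hε)
  have hpC : Tendsto (fun p : ℝ => p * C) (𝓝[>] 0) (𝓝 0) := by
    simpa using (tendsto_nhdsWithin_of_tendsto_nhds
      ((continuous_id.mul_const C).tendsto (0 : ℝ)))
  filter_upwards [Ioo_mem_nhdsGT one_pos, hpC.eventually (gt_mem_nhds (half_pos hε))]
    with p hp hpC
  linarith [norm_tsum_geometric_cexp_sub_le hp hz hw hC]

theorem stmt_3_general
    {Ω : Type*} [MeasurableSpace Ω] {μ : Measure Ω}
    (Y : ℕ → Ω → ℝ) (a : ℕ → ℝ) (v : ℕ → NNReal) (σ2 A : ℝ)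
    (hindep : iIndepFun Y μ)
    (hgauss : ∀ j, Measure.map (Y j) μ = gaussianReal 0 (v j))
    (hσ2 : Tendsto (fun n : ℕ => (1 / (n : ℝ)) * ∑ j ∈ Finset.range n, (v j : ℝ)) atTop
      (nhds σ2))
    (hA : Tendsto (fun n : ℕ => (1 / (n : ℝ)) * ∑ j ∈ Finset.range n, a j) atTop (nhds A)) :
    ∀ t : ℝ,
      Tendsto
        (fun p : ℝ => ∑' n : ℕ,
          (((1 - p) ^ n * p : ℝ) : ℂ) *
            ∫ ω, Complex.exp (Complex.I *
              ((t * (Real.sqrt p * (∑ j ∈ Finset.range (n + 1), Y j ω)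
                + p * ∑ j ∈ Finset.range (n + 1), a j) : ℝ) : ℂ)) ∂μ)
        (nhdsWithin 0 (Set.Ioi 0))
        (nhds (1 / (1 - Complex.I * A * t + σ2 * t ^ 2 / 2))) := by
  intro t
  set z : ℕ → ℂ := fun n => I * t * (∑ j ∈ Finset.range n, a j : ℝ)
    - t ^ 2 * (∑ j ∈ Finset.range n, (v j : ℝ) : ℝ) / 2
  have hz : ∀ n, (z n).re ≤ 0 := fun n => by
    simp only [z, sub_re, mul_re, I_re, I_im, ofReal_re, ofReal_im, div_ofNat_re, ← ofReal_pow]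
    have : 0 ≤ t ^ 2 * ∑ j ∈ Finset.range n, (v j : ℝ) := by positivity
    linarith
  have hlim : Tendsto (fun n : ℕ => z n / n) atTop (𝓝 (I * t * A - t ^ 2 * σ2 / 2)) := by
    have h := (((continuous_ofReal.tendsto A).comp hA).const_mul (I * t)).sub
      ((((continuous_ofReal.tendsto σ2).comp hσ2).const_mul ((t : ℂ) ^ 2)).div_const 2)
    refine h.congr fun n => ?_
    simp [z]
    ring
  have hterm : ∀ p : ℝ, 0 < p → ∀ n : ℕ,
      ∫ ω, cexp (I * ((t * (√p * (∑ j ∈ Finset.range (n + 1), Y j ω)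
        + p * ∑ j ∈ Finset.range (n + 1), a j) : ℝ) : ℂ)) ∂μ = cexp (p * z (n + 1)) := by
    intro p hp n
    simp_rw [mul_add, ← mul_assoc]
    rw [integral_cexp_I_mul_finsetSum_gaussianReal hindep hgauss]
    congr 1
    rw [← Complex.ofReal_pow, mul_pow, Real.sq_sqrt hp.le]
    push_cast [z]
    ring
  convert (tendsto_tsum_geometric_cexp hz hlim).congr' ?_ using 2
  · rw [one_div]
    ring_nf
  · filter_upwards [self_mem_nhdsWithin] with p hp
    exact tsum_congr fun n => by rw [hterm p hp n]

/-- Proposition 2 of the paper.  Let `Y j` be independent Gaussian random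
variables with `Y j ~ N(0, v j)` such that the Cesàro limit `σ²` of the variances exists and
is positive, and let `a j` be a real sequence whose Cesàro limit `A` exists.  Then the
characteristic function of the normalized geometric sum converges pointwise to that of
`AL(0, A, σ)`, i.e. `p^{1/2} ∑_{j=1}^{ν_p} (Y_j + p^{1/2} a_j) ⟶ᵈ AL(0, A, σ)` as `p → 0⁺`. -/
theorem stmt_3
    {Ω : Type*} [MeasurableSpace Ω] {μ : Measure Ω} [IsProbabilityMeasure μ]
    (Y : ℕ → Ω → ℝ) (a : ℕ → ℝ) (v : ℕ → NNReal) (σ2 A : ℝ)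
    (hmeas : ∀ j, Measurable (Y j))
    (hindep : iIndepFun Y μ)
    (hgauss : ∀ j, Measure.map (Y j) μ = gaussianReal 0 (v j))
    (hσ2 : Tendsto (fun n : ℕ => (1 / (n : ℝ)) * ∑ j ∈ Finset.range n, (v j : ℝ)) atTop
      (nhds σ2))
    (hσ2pos : 0 < σ2)
    (hA : Tendsto (fun n : ℕ => (1 / (n : ℝ)) * ∑ j ∈ Finset.range n, a j) atTop (nhds A)) :
    ∀ t : ℝ,
      Tendsto
        (fun p : ℝ => ∑' n : ℕ,
          (((1 - p) ^ n * p : ℝ) : ℂ) *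
            ∫ ω, Complex.exp (Complex.I *
              ((t * (Real.sqrt p * (∑ j ∈ Finset.range (n + 1), Y j ω)
                + p * ∑ j ∈ Finset.range (n + 1), a j) : ℝ) : ℂ)) ∂μ)
        (nhdsWithin 0 (Set.Ioi 0))
        (nhds (1 / (1 - Complex.I * A * t + σ2 * t ^ 2 / 2))) :=
  stmt_3_general Y a v σ2 A hindep hgauss hσ2 hA
end

section
/- Let {Y_j} be a sequence of independent Gaussian random variables with Y_j ~ N(0, σ_j²), and suppose there exists α ∈ (0,1) such that lim_{n→∞} n^{-α} σ_n² = 0. Then for every ε > 0, lim_{p→0⁺} Σ_{j=1}^∞ (1-p)^{j-1} p · E[Y_j² · 1{|Y_j| ≥ ε p^{-1/2}}] = 0. -/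
open MeasureTheory ProbabilityTheory Filter Set

/-!
On `{|Y j| ≥ t}` one has `Y j ^ 2 ≤ Y j ^ (2 (n + 2)) / t ^ (2 (n + 1))`, so with `t = ε / √p` the
`j`-th term is at most a Gaussian moment times `(1 - p) ^ j * p ^ (n + 2) * v j ^ (n + 2)`.
Choosing `n` with `α (n + 2) ≤ n`, the growth hypothesis gives `v j ^ (n + 2) = O((j + 1) ^ n)`,
and `∑ (1 - p) ^ j (j + 1) ^ n ≤ n! / p ^ (n + 1)`. Hence the whole sum is `O(p)`.
-/

open scoped NNReal Nat Topology

lemma exists_nat_mul_add_two_le {α : ℝ} (hα : α < 1) : ∃ n : ℕ, α * (n + 2) ≤ n := by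
  obtain ⟨n, hn⟩ := exists_nat_ge (2 / (1 - α))
  refine ⟨n, ?_⟩
  have : 2 ≤ (1 - α) * n := by rwa [div_le_iff₀' (by linarith)] at hn
  linarith

lemma exists_pow_le_mul_add_one_pow {f : ℕ → ℝ} (hf0 : ∀ n, 0 ≤ f n) {α : ℝ}
    (hf : Tendsto (fun n : ℕ => (n : ℝ) ^ (-α) * f n) atTop (𝓝 0)) {k m : ℕ}
    (hkm : α * k ≤ m) : ∃ C, ∀ n : ℕ, f n ^ k ≤ C * ((n : ℝ) + 1) ^ m := by
  obtain ⟨N, hN⟩ := eventually_atTop.mp (hf.eventually_le_const one_pos)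
  set S := ∑ i ∈ Finset.range (N + 1), f i ^ k
  have hS : 0 ≤ S := Finset.sum_nonneg fun i _ => pow_nonneg (hf0 i) k
  refine ⟨1 + S, fun n => ?_⟩
  have hpow : 1 ≤ ((n : ℝ) + 1) ^ m := one_le_pow₀ (by linarith [n.cast_nonneg (α := ℝ)])
  suffices f n ^ k ≤ S + ((n : ℝ) + 1) ^ m by nlinarith
  rcases lt_or_ge n (N + 1) with hn | hn
  · have hle : f n ^ k ≤ S :=
      Finset.single_le_sum (fun i _ => pow_nonneg (hf0 i) k) (Finset.mem_range.2 hn)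
    linarith [pow_nonneg (by linarith : (0 : ℝ) ≤ n + 1) m]
  · have hn1 : (1 : ℝ) ≤ n := by exact_mod_cast (by omega : 1 ≤ n)
    have hn0 : (0 : ℝ) < n := by linarith
    have hfn : f n ≤ (n : ℝ) ^ α := by
      have h := hN n (by omega)
      rwa [Real.rpow_neg hn0.le, inv_mul_le_iff₀ (by positivity), mul_one] at h
    calc f n ^ k ≤ ((n : ℝ) ^ α) ^ k := pow_le_pow_left₀ (hf0 n) hfn k
      _ = (n : ℝ) ^ (α * k) := by rw [← Real.rpow_natCast, ← Real.rpow_mul hn0.le]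
      _ ≤ (n : ℝ) ^ (m : ℝ) := Real.rpow_le_rpow_of_exponent_le hn1 hkm
      _ ≤ ((n : ℝ) + 1) ^ m := by rw [Real.rpow_natCast]; gcongr; linarith
      _ ≤ S + ((n : ℝ) + 1) ^ m := le_add_of_nonneg_left hS

lemma tsum_le_mul_factorial_div_of_le {a : ℕ → ℝ} {r B : ℝ} {m : ℕ} (hr0 : 0 ≤ r) (hr1 : r < 1)
    (ha0 : ∀ j, 0 ≤ a j) (ha : ∀ j, a j ≤ B * (r ^ j * ((j : ℝ) + 1) ^ m)) :
    ∑' j, a j ≤ B * (m ! / (1 - r) ^ (m + 1)) := by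
  have hB : 0 ≤ B := by simpa using (ha0 0).trans (ha 0)
  have hchoose : ∀ j : ℕ, ((j : ℝ) + 1) ^ m ≤ m ! * (j + m).choose m := by
    intro j
    exact_mod_cast (Nat.pow_succ_le_ascFactorial (j + 1) m).trans_eq
      (Nat.ascFactorial_eq_factorial_mul_choose j m)
  have hle : ∀ j, a j ≤ B * m ! * ((j + m).choose m * r ^ j) := by
    intro j
    calc a j ≤ B * (r ^ j * ((j : ℝ) + 1) ^ m) := ha j
      _ ≤ B * (r ^ j * (m ! * (j + m).choose m)) := by gcongr; exact hchoose j
      _ = B * m ! * ((j + m).choose m * r ^ j) := by ring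
  have hgeom := (hasSum_choose_mul_geometric_of_norm_lt_one m
    (r := r) (by rwa [Real.norm_of_nonneg hr0])).mul_left (B * m !)
  have hsum : Summable a := .of_nonneg_of_le ha0 hle hgeom.summable
  calc ∑' j, a j ≤ B * m ! * (1 / (1 - r) ^ (m + 1)) := hasSum_le hle hsum.hasSum hgeom
    _ = B * (m ! / (1 - r) ^ (m + 1)) := by ring

lemma integrable_pow_gaussianReal (μ : ℝ) (v : ℝ≥0) (n : ℕ) :
    Integrable (fun x : ℝ => x ^ n) (gaussianReal μ v) :=
  (integrable_norm_iff (by fun_prop)).1 <| by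
    simpa [norm_pow] using (memLp_id_gaussianReal (μ := μ) (v := v) n).integrable_norm_pow'

lemma integral_even_pow_gaussianReal_zero (v : ℝ≥0) (k : ℕ) :
    ∫ x, x ^ (2 * k) ∂gaussianReal 0 v = v ^ k * ∫ x, x ^ (2 * k) ∂gaussianReal 0 1 := by
  have hmap : (gaussianReal 0 1).map (√(v : ℝ) * ·) = gaussianReal 0 v := by
    rw [gaussianReal_map_const_mul]
    congr 1
    · simp
    · ext; simp
  rw [← hmap, integral_map (by fun_prop) (by fun_prop), ← integral_const_mul]
  congr 1 with x
  rw [mul_pow, pow_mul, Real.sq_sqrt v.coe_nonneg]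

lemma setIntegral_sq_le_of_le_abs {Ω : Type*} [MeasurableSpace Ω] {μ : Measure Ω} {X : Ω → ℝ}
    (hX : Measurable X) {n : ℕ} (hint : Integrable (fun ω => X ω ^ (2 * (n + 1))) μ)
    {t : ℝ} (ht : 0 < t) :
    ∫ ω in {ω | t ≤ |X ω|}, X ω ^ 2 ∂μ ≤ (∫ ω, X ω ^ (2 * (n + 1)) ∂μ) / t ^ (2 * n) := by
  have hs : MeasurableSet {ω | t ≤ |X ω|} := measurableSet_le measurable_const hX.abs
  have hpt : ∀ ω ∈ {ω | t ≤ |X ω|}, X ω ^ 2 ≤ X ω ^ (2 * (n + 1)) / t ^ (2 * n) := by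
    intro ω (hω : t ≤ |X ω|)
    have ht2 : t ^ 2 ≤ X ω ^ 2 := by simpa using pow_le_pow_left₀ ht.le hω 2
    rw [le_div_iff₀ (by positivity)]
    calc X ω ^ 2 * t ^ (2 * n) = X ω ^ 2 * (t ^ 2) ^ n := by ring
      _ ≤ X ω ^ 2 * (X ω ^ 2) ^ n := by gcongr
      _ = X ω ^ (2 * (n + 1)) := by ring
  calc ∫ ω in {ω | t ≤ |X ω|}, X ω ^ 2 ∂μ
      ≤ ∫ ω in {ω | t ≤ |X ω|}, X ω ^ (2 * (n + 1)) / t ^ (2 * n) ∂μ :=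
        integral_mono_of_nonneg (ae_of_all _ fun ω => sq_nonneg _)
          (hint.div_const _).integrableOn (ae_restrict_of_forall_mem hs hpt)
    _ ≤ ∫ ω, X ω ^ (2 * (n + 1)) / t ^ (2 * n) ∂μ :=
        setIntegral_le_integral (hint.div_const _)
          (ae_of_all _ fun ω => div_nonneg ((even_two_mul _).pow_nonneg _) (by positivity))
    _ = (∫ ω, X ω ^ (2 * (n + 1)) ∂μ) / t ^ (2 * n) := integral_div _ _

lemma setIntegral_sq_le_of_map_eq_gaussianReal {Ω : Type*} [MeasurableSpace Ω] {μ : Measure Ω}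
    {X : Ω → ℝ} (hX : Measurable X) {v : ℝ≥0} (hXv : μ.map X = gaussianReal 0 v) {t : ℝ}
    (ht : 0 < t) (n : ℕ) :
    ∫ ω in {ω | t ≤ |X ω|}, X ω ^ 2 ∂μ
      ≤ v ^ (n + 1) * (∫ x, x ^ (2 * (n + 1)) ∂gaussianReal 0 1) / t ^ (2 * n) := by
  have hint : Integrable (fun ω => X ω ^ (2 * (n + 1))) μ :=
    (integrable_map_measure (g := fun x : ℝ => x ^ (2 * (n + 1))) (by fun_prop)
      hX.aemeasurable).1 (hXv ▸ integrable_pow_gaussianReal 0 v _)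
  have hmoment : ∫ ω, X ω ^ (2 * (n + 1)) ∂μ
      = v ^ (n + 1) * ∫ x, x ^ (2 * (n + 1)) ∂gaussianReal 0 1 :=
    (HasLaw.integral_comp ⟨hX.aemeasurable, hXv⟩ (f := fun x : ℝ => x ^ (2 * (n + 1)))
      (by fun_prop)).trans (integral_even_pow_gaussianReal_zero v _)
  exact hmoment ▸ setIntegral_sq_le_of_le_abs hX hint ht

lemma tsum_geometric_mul_tail_sq_le {Ω : Type*} [MeasurableSpace Ω] {μ : Measure Ω}
    {Y : ℕ → Ω → ℝ} {v : ℕ → ℝ≥0} (hmeas : ∀ j, Measurable (Y j))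
    (hgauss : ∀ j, μ.map (Y j) = gaussianReal 0 (v j)) {n : ℕ} {C : ℝ}
    (hC : ∀ j : ℕ, (v j : ℝ) ^ (n + 2) ≤ C * ((j : ℝ) + 1) ^ n) {ε p : ℝ} (hε : 0 < ε)
    (hp0 : 0 < p) (hp1 : p ≤ 1) :
    ∑' j, (1 - p) ^ j * p * ∫ ω in {ω | ε / √p ≤ |Y j ω|}, Y j ω ^ 2 ∂μ
      ≤ (∫ x, x ^ (2 * (n + 2)) ∂gaussianReal 0 1) * C * n ! / ε ^ (2 * (n + 1)) * p := by
  set M := ∫ x, x ^ (2 * (n + 2)) ∂gaussianReal 0 1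
  have hM : 0 ≤ M := integral_nonneg fun x => (even_two_mul _).pow_nonneg _
  have hq : 0 ≤ 1 - p := by linarith
  have htpow : (ε / √p) ^ (2 * (n + 1)) = ε ^ (2 * (n + 1)) / p ^ (n + 1) := by
    rw [div_pow, pow_mul √p, Real.sq_sqrt hp0.le]
  have hterm : ∀ j : ℕ, (1 - p) ^ j * p * ∫ ω in {ω | ε / √p ≤ |Y j ω|}, Y j ω ^ 2 ∂μ
      ≤ M * p ^ (n + 2) / ε ^ (2 * (n + 1)) * C * ((1 - p) ^ j * ((j : ℝ) + 1) ^ n) := by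
    intro j
    have htail := setIntegral_sq_le_of_map_eq_gaussianReal (hmeas j) (hgauss j)
      (by positivity : 0 < ε / √p) (n + 1)
    rw [htpow] at htail
    calc (1 - p) ^ j * p * ∫ ω in {ω | ε / √p ≤ |Y j ω|}, Y j ω ^ 2 ∂μ
        ≤ (1 - p) ^ j * p * ((v j : ℝ) ^ (n + 2) * M / (ε ^ (2 * (n + 1)) / p ^ (n + 1))) := by
          gcongr
      _ = M * p ^ (n + 2) / ε ^ (2 * (n + 1)) * ((1 - p) ^ j * (v j : ℝ) ^ (n + 2)) := by
          field_simp
          ring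
      _ ≤ M * p ^ (n + 2) / ε ^ (2 * (n + 1)) * C * ((1 - p) ^ j * ((j : ℝ) + 1) ^ n) := by
          rw [mul_assoc _ C, mul_left_comm C]
          gcongr
          exact hC j
  have hnonneg : ∀ j : ℕ, 0 ≤ (1 - p) ^ j * p * ∫ ω in {ω | ε / √p ≤ |Y j ω|}, Y j ω ^ 2 ∂μ :=
    fun j => mul_nonneg (mul_nonneg (pow_nonneg hq j) hp0.le) (integral_nonneg fun ω => sq_nonneg _)
  calc _ ≤ M * p ^ (n + 2) / ε ^ (2 * (n + 1)) * C * (n ! / (1 - (1 - p)) ^ (n + 1)) :=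
        tsum_le_mul_factorial_div_of_le hq (by linarith) hnonneg hterm
    _ = M * C * n ! / ε ^ (2 * (n + 1)) * p := by
        rw [sub_sub_cancel]
        field_simp
        ring

theorem stmt_4_general
    {Ω : Type*} [MeasurableSpace Ω] {μ : Measure Ω}
    (Y : ℕ → Ω → ℝ) (v : ℕ → NNReal) (α : ℝ)
    (hmeas : ∀ j, Measurable (Y j))
    (hgauss : ∀ j, Measure.map (Y j) μ = gaussianReal 0 (v j))
    (hα1 : α < 1)
    (hvlim : Tendsto (fun n : ℕ => (n : ℝ) ^ (-α) * (v n : ℝ)) atTop (nhds 0)) :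
    ∀ ε > (0 : ℝ),
      Tendsto
        (fun p : ℝ => ∑' j : ℕ,
          (1 - p) ^ j * p *
            ∫ ω in {ω | ε / Real.sqrt p ≤ |Y j ω|}, (Y j ω) ^ 2 ∂μ)
        (nhdsWithin 0 (Set.Ioi 0)) (nhds 0) := by
  intro ε hε
  obtain ⟨n, hn⟩ := exists_nat_mul_add_two_le hα1
  obtain ⟨C, hC⟩ := exists_pow_le_mul_add_one_pow (fun j => (v j).coe_nonneg) hvlim
    (k := n + 2) (m := n) (by exact_mod_cast hn)
  set K := (∫ x, x ^ (2 * (n + 2)) ∂gaussianReal 0 1) * C * n ! / ε ^ (2 * (n + 1))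
  refine squeeze_zero' (g := fun p => K * p) ?_ ?_
    (((continuous_const_mul K).tendsto' 0 0 (mul_zero K)).mono_left nhdsWithin_le_nhds)
  · filter_upwards [Ioo_mem_nhdsGT one_pos] with p hp
    exact tsum_nonneg fun j => mul_nonneg (mul_nonneg (pow_nonneg (by linarith [hp.2]) j) hp.1.le)
      (integral_nonneg fun ω => sq_nonneg _)
  · filter_upwards [Ioo_mem_nhdsGT one_pos] with p hp
    exact tsum_geometric_mul_tail_sq_le hmeas hgauss hC hε hp.1 hp.2.le

/-- Lemma 3 of the paper.  Let `Y j` be independent Gaussian random variables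
with `Y j ~ N(0, v j)` and suppose `n ^ (-α) * v n → 0` for some `α ∈ (0, 1)`.  Then for every
`ε > 0`, `∑_{j=1}^∞ (1-p)^{j-1} p ⋅ E[Y_j² ⋅ 1{|Y_j| ≥ ε p^{-1/2}}] → 0` as `p → 0⁺`. -/
theorem stmt_4
    {Ω : Type*} [MeasurableSpace Ω] {μ : Measure Ω} [IsProbabilityMeasure μ]
    (Y : ℕ → Ω → ℝ) (v : ℕ → NNReal) (α : ℝ)
    (hmeas : ∀ j, Measurable (Y j))
    (hindep : iIndepFun Y μ)
    (hgauss : ∀ j, Measure.map (Y j) μ = gaussianReal 0 (v j))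
    (hα0 : 0 < α) (hα1 : α < 1)
    (hvlim : Tendsto (fun n : ℕ => (n : ℝ) ^ (-α) * (v n : ℝ)) atTop (nhds 0)) :
    ∀ ε > (0 : ℝ),
      Tendsto
        (fun p : ℝ => ∑' j : ℕ,
          (1 - p) ^ j * p *
            ∫ ω in {ω | ε / Real.sqrt p ≤ |Y j ω|}, (Y j ω) ^ 2 ∂μ)
        (nhdsWithin 0 (Set.Ioi 0)) (nhds 0) :=
  stmt_4_general Y v α hmeas hgauss hα1 hvlim
end
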